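/- arXiv:1104.0632 — 3 statements merged into one kernel-verified Lean document; each statement's English description precedes it below -/
import Mathlib

section
/- For the unit ball b_∞^M of ℓ^∞ in ℝ^M mapped into ℓ^1, the Kolmogorov n-width satisfies d_n(b_∞^M, ℓ_1^M) = M − n for 0 ≤ n ≤ M. -/
/-!
Upper bound: projecting onto `n` coordinates leaves an error supported on the other `M - n`
coordinates, each of modulus at most `1`.

Lower bound: if `dim Z ≤ n`, the annihilator `V` of `Z` for the dot product has dimension at least
`M - n`. An extreme point `y` of `V ∩ [-1, 1]^M` has at least `dim V` coordinates of modulus `1`,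
since otherwise some nonzero `w ∈ V` vanishes on all of them and `y ± t w` stays in the cube for
small `t`. Then `x = sign y` lies in the cube and, for every `z ∈ Z`,
`‖x - z‖₁ ≥ ⟪x - z, y⟫ = ⟪x, y⟫ = ‖y‖₁ ≥ M - n`.
-/

open scoped ENNReal NNReal

/-- The Kolmogorov `n`-width of a subset `H` of a normed space `Y`. -/
noncomputable def kolWidth {Y : Type*} [NormedAddCommGroup Y] [NormedSpace ℝ Y]
    (n : ℕ) (H : Set Y) : ℝ≥0∞ :=
  ⨅ (Z : Submodule ℝ Y) (_ : Module.rank ℝ Z ≤ (n : Cardinal)),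
    ⨆ x ∈ H, ⨅ z ∈ (Z : Set Y), edist x z

open Finset Metric Module Filter Topology

section KolmogorovWidth

variable {Y : Type*} [NormedAddCommGroup Y] [NormedSpace ℝ Y] {n : ℕ} {H : Set Y} {c : ℝ≥0∞}

theorem kolWidth_le (Z : Submodule ℝ Y) (hZ : Module.rank ℝ Z ≤ n)
    (h : ∀ x ∈ H, ∃ z ∈ Z, edist x z ≤ c) : kolWidth n H ≤ c :=
  iInf₂_le_of_le Z hZ <| iSup₂_le fun x hx =>
    let ⟨z, hz, hxz⟩ := h x hx
    (iInf₂_le z hz).trans hxz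

theorem le_kolWidth
    (h : ∀ Z : Submodule ℝ Y, Module.rank ℝ Z ≤ n → ∃ x ∈ H, ∀ z ∈ Z, c ≤ edist x z) :
    c ≤ kolWidth n H :=
  le_iInf₂ fun Z hZ =>
    let ⟨x, hx, hxZ⟩ := h Z hZ
    le_iSup₂_of_le x hx <| le_iInf₂ hxZ

end KolmogorovWidth

variable {ι : Type*} [Fintype ι]

theorem PiLp.edist_real_eq_ofReal_sum_abs_sub (x z : PiLp 1 (fun _ : ι => ℝ)) :
    edist x z = ENNReal.ofReal (∑ i, |x i - z i|) := by
  rw [edist_dist, PiLp.dist_eq_of_L1]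
  simp only [Real.dist_eq]

theorem finrank_le_card_abs_eq_one_of_mem_extremePoints {V : Submodule ℝ (ι → ℝ)} {y : ι → ℝ}
    (hy : y ∈ ((V : Set (ι → ℝ)) ∩ closedBall 0 1).extremePoints ℝ) :
    finrank ℝ V ≤ #{i | |y i| = 1} := by
  classical
  obtain ⟨⟨hyV, hy1⟩, hext⟩ := hy
  rw [mem_closedBall_zero_iff, pi_norm_le_iff_of_nonneg zero_le_one] at hy1
  by_contra! hlt
  set S : Finset ι := {i | |y i| = 1}
  let ρ : V →ₗ[ℝ] (S → ℝ) := LinearMap.funLeft ℝ ℝ (Subtype.val : S → ι) ∘ₗ V.subtype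
  obtain ⟨w, hwρ, hw0⟩ := (Submodule.ne_bot_iff _).1 <|
    ρ.ker_ne_bot_of_finrank_lt (by simpa using hlt)
  have hwS : ∀ i ∈ S, (w : ι → ℝ) i = 0 := fun i hi => congr_fun hwρ ⟨i, hi⟩
  have hnear : ∀ᶠ t in 𝓝 (0 : ℝ), y + t • (w : ι → ℝ) ∈ closedBall 0 1 := by
    simp only [mem_closedBall_zero_iff, pi_norm_le_iff_of_nonneg zero_le_one, Pi.add_apply,
      Pi.smul_apply, smul_eq_mul, Real.norm_eq_abs]
    refine eventually_all.2 fun i => ?_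
    by_cases hi : i ∈ S
    · simpa [hwS i hi] using hy1 i
    · have : |y i| < 1 := (by simpa using hy1 i : |y i| ≤ 1).lt_of_ne (by simpa [S] using hi)
      exact (ContinuousAt.eventually_lt (by fun_prop) continuousAt_const (by simpa using this)).mono
        fun _ => le_of_lt
  obtain ⟨δ, hδ, hball⟩ := Metric.eventually_nhds_iff.1 hnear
  have hmem : ∀ t : ℝ, |t| < δ → y + t • (w : ι → ℝ) ∈ (V : Set (ι → ℝ)) ∩ closedBall 0 1 :=
    fun t ht => ⟨V.add_mem hyV (V.smul_mem t w.2), hball (by simpa using ht)⟩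
  have hδ2 : |δ / 2| < δ := by rw [abs_of_pos (half_pos hδ)]; exact half_lt_self hδ
  have hseg : y ∈ openSegment ℝ (y + (δ / 2) • (w : ι → ℝ)) (y + (-(δ / 2)) • (w : ι → ℝ)) :=
    ⟨1 / 2, 1 / 2, by norm_num, by norm_num, by norm_num, by module⟩
  have := hext (hmem _ hδ2) (hmem _ (by rwa [abs_neg])) hseg
  simp [hδ.ne', hw0] at this

theorem card_abs_eq_one_le_sum_abs (y : ι → ℝ) : (#{i | |y i| = 1} : ℝ) ≤ ∑ i, |y i| := by
  classical
  rw [← sum_boole]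
  exact sum_le_sum fun i _ => by split_ifs with h <;> simp [h]

theorem exists_mem_closedBall_finrank_le_sum_abs (V : Submodule ℝ (ι → ℝ)) :
    ∃ y ∈ V, y ∈ closedBall 0 1 ∧ (finrank ℝ V : ℝ) ≤ ∑ i, |y i| := by
  have hcompact : IsCompact ((V : Set (ι → ℝ)) ∩ closedBall 0 1) :=
    (isCompact_closedBall 0 1).inter_left V.closed_of_finiteDimensional
  obtain ⟨y, hy⟩ := hcompact.extremePoints_nonempty ⟨0, V.zero_mem, mem_closedBall_self zero_le_one⟩
  exact ⟨y, hy.1.1, hy.1.2,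
    (Nat.cast_le.2 (finrank_le_card_abs_eq_one_of_mem_extremePoints hy)).trans
      (card_abs_eq_one_le_sum_abs y)⟩

theorem exists_forall_dotProduct_eq_zero_sub_finrank_le_sum_abs (Z : Submodule ℝ (ι → ℝ)) :
    ∃ y ∈ closedBall (0 : ι → ℝ) 1, (∀ z ∈ Z, z ⬝ᵥ y = 0) ∧
      (Fintype.card ι : ℝ) - finrank ℝ Z ≤ ∑ i, |y i| := by
  classical
  let V := Z.dualAnnihilator.map (dotProductEquiv ℝ ι).symm.toLinearMap
  have hV : finrank ℝ Z + finrank ℝ V = Fintype.card ι := by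
    rw [LinearEquiv.finrank_map_eq, Subspace.finrank_add_finrank_dualAnnihilator_eq,
      Module.finrank_fintype_fun_eq_card]
  obtain ⟨y, hyV, hy1, hy⟩ := exists_mem_closedBall_finrank_le_sum_abs V
  refine ⟨y, hy1, fun z hz => ?_, ?_⟩
  · rw [Submodule.mem_map_equiv, LinearEquiv.symm_symm, Submodule.mem_dualAnnihilator] at hyV
    simpa [dotProduct_comm] using hyV z hz
  · have : (Fintype.card ι : ℝ) = finrank ℝ Z + finrank ℝ V := by exact_mod_cast hV.symm
    linarith

theorem exists_abs_le_one_sub_finrank_le_sum_abs_sub (Z : Submodule ℝ (ι → ℝ)) :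
    ∃ x : ι → ℝ, (∀ i, |x i| ≤ 1) ∧
      ∀ z ∈ Z, (Fintype.card ι : ℝ) - finrank ℝ Z ≤ ∑ i, |x i - z i| := by
  obtain ⟨y, hy1, hZy, hy⟩ := exists_forall_dotProduct_eq_zero_sub_finrank_le_sum_abs Z
  rw [mem_closedBall_zero_iff, pi_norm_le_iff_of_nonneg zero_le_one] at hy1
  refine ⟨fun i => SignType.sign (y i), fun i => ?_, fun z hz => ?_⟩
  · rcases lt_trichotomy (y i) 0 with h | h | h <;> simp [h]
  calc (Fintype.card ι : ℝ) - finrank ℝ Z ≤ ∑ i, |y i| := hy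
    _ = ∑ i, (SignType.sign (y i) - z i) * y i := by
      simp only [sub_mul, sum_sub_distrib, sign_mul_self]
      rw [← dotProduct, hZy z hz, sub_zero]
    _ ≤ ∑ i, |SignType.sign (y i) - z i| := sum_le_sum fun i _ => by
      calc _ ≤ |(SignType.sign (y i) - z i : ℝ)| * |y i| := (le_abs_self _).trans (abs_mul _ _).le
        _ ≤ _ := mul_le_of_le_one_right (abs_nonneg _) (hy1 i)

theorem kolWidth_cube_le_card_compl [DecidableEq ι] (S : Finset ι) :
    kolWidth #S {a : PiLp 1 (fun _ : ι => ℝ) | ∀ i, |a i| ≤ 1} ≤ (#Sᶜ : ℝ≥0∞) := by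
  let T : (S → ℝ) →ₗ[ℝ] PiLp 1 (fun _ : ι => ℝ) :=
    (WithLp.linearEquiv 1 ℝ (ι → ℝ)).symm.toLinearMap ∘ₗ
      Function.ExtendByZero.linearMap ℝ (Subtype.val : S → ι)
  have hT : ∀ (f : S → ℝ) (i : ι), T f i = if h : i ∈ S then f ⟨i, h⟩ else 0 := by
    intro f i
    split_ifs with h
    · exact Subtype.val_injective.extend_apply f (0 : ι → ℝ) ⟨i, h⟩
    · exact Function.extend_apply' f (0 : ι → ℝ) i fun ⟨a, ha⟩ => h (ha ▸ a.2)
  refine kolWidth_le (LinearMap.range T) ((rank_range_le T).trans (by simp))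
    fun x hx => ⟨T fun i => x i, LinearMap.mem_range_self T _, ?_⟩
  rw [PiLp.edist_real_eq_ofReal_sum_abs_sub, ← ENNReal.ofReal_natCast]
  refine ENNReal.ofReal_le_ofReal ?_
  calc ∑ i, |x i - T (fun i => x i) i| ≤ ∑ i, if i ∈ Sᶜ then (1 : ℝ) else 0 :=
        sum_le_sum fun i _ => by by_cases h : i ∈ S <;> simp [hT, h, hx i]
    _ = #Sᶜ := by rw [sum_boole, filter_mem_eq_inter, univ_inter]

theorem card_sub_le_kolWidth_cube (n : ℕ) :
    ((Fintype.card ι - n : ℕ) : ℝ≥0∞) ≤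
      kolWidth n {a : PiLp 1 (fun _ : ι => ℝ) | ∀ i, |a i| ≤ 1} := by
  refine le_kolWidth fun Z hZ => ?_
  let Z' := Z.map (WithLp.linearEquiv 1 ℝ (ι → ℝ)).toLinearMap
  have hZ' : finrank ℝ Z' ≤ n :=
    (LinearEquiv.finrank_map_eq _ Z).trans_le (finrank_le_of_rank_le hZ)
  obtain ⟨x, hx1, hx⟩ := exists_abs_le_one_sub_finrank_le_sum_abs_sub Z'
  refine ⟨WithLp.toLp 1 x, hx1, fun z hz => ?_⟩
  rw [PiLp.edist_real_eq_ofReal_sum_abs_sub, ← ENNReal.ofReal_natCast]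
  refine ENNReal.ofReal_le_ofReal (le_trans ?_ (hx z.ofLp (Submodule.mem_map_of_mem hz)))
  have hZ'card : finrank ℝ Z' ≤ Fintype.card ι :=
    (Submodule.finrank_le Z').trans (finrank_fintype_fun_eq_card ℝ).le
  rw [← Nat.cast_sub hZ'card]
  exact Nat.cast_le.2 (Nat.sub_le_sub_left hZ' _)

/-- `d_n(b_∞^M, ℓ_1^M) = M - n` for `0 ≤ n ≤ M`: the Kolmogorov `n`-width of the
unit cube of `ℝ^M`, measured in the `ℓ¹` norm, equals `M - n`. -/
theorem stmt8 (M n : ℕ) (hn : n ≤ M) :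
    kolWidth n {a : PiLp 1 (fun _ : Fin M => ℝ) | ∀ i, |a i| ≤ 1} =
      ((M - n : ℕ) : ℝ≥0∞) := by
  classical
  obtain ⟨S, -, hS⟩ := exists_subset_card_eq (s := (univ : Finset (Fin M))) (by simpa using hn)
  refine le_antisymm ?_ (by simpa using card_sub_le_kolWidth_cube (ι := Fin M) n)
  simpa [hS, card_compl] using kolWidth_cube_le_card_compl S
end

section
/- For 0 ≤ n ≤ M, the Kolmogorov n-width of the unit ball of ℓ^1 in ℝ^M, measured in the ℓ² norm, equals √(1 − n/M): d_n(b_1^M, ℓ_2^M) = √(1 − n/M). -/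
/-!
If `P` is the orthogonal projection onto a subspace `Z` of `ℝ^M`, the distance from the unit
vector `eᵢ` to `Z` is `√(1 - ‖P eᵢ‖²)`, while `∑ᵢ ‖P eᵢ‖² = dim Z` (Parseval for an orthonormal
basis of `Z`). So when `dim Z ≤ n` some `eᵢ`, a point of the `ℓ¹` ball, is at distance at least
`√(1 - n/M)` from `Z`. Conversely, by the triangle inequality every point of the `ℓ¹` ball is
within `maxᵢ dist(eᵢ, Z)` of `Z`, so it suffices to find an `n`-dimensional `Z` with
`‖P eᵢ‖² = n/M` for every `i`. The discrete Fourier basis provides one: the sampled sine–cosine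
pairs of frequencies `1, …, ⌊n/2⌋`, together with the constant vector when `n` is odd, are
orthonormal by the orthogonality of the characters of `ℤ/M`, and the sum of their squares is
the same at every sample point because `sin² + cos² = 1`.
-/

open scoped ENNReal NNReal

open Real Finset Module
open scoped RealInnerProductSpace

section KolmogorovWidth

variable {Y : Type*} [NormedAddCommGroup Y] [NormedSpace ℝ Y] {n : ℕ} {H : Set Y} {r : ℝ}

lemma kolWidth_le_ofReal (Z : Submodule ℝ Y) (hZ : Module.rank ℝ Z ≤ n)
    (h : ∀ x ∈ H, ∃ z ∈ Z, dist x z ≤ r) : kolWidth n H ≤ ENNReal.ofReal r :=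
  (iInf₂_le Z hZ).trans <| iSup₂_le fun x hx => by
    obtain ⟨z, hz, hxz⟩ := h x hx
    exact (iInf₂_le z hz).trans (edist_dist x z ▸ ENNReal.ofReal_le_ofReal hxz)

lemma ofReal_le_kolWidth
    (h : ∀ Z : Submodule ℝ Y, Module.rank ℝ Z ≤ n → ∃ x ∈ H, ∀ z ∈ Z, r ≤ dist x z) :
    ENNReal.ofReal r ≤ kolWidth n H :=
  le_iInf₂ fun Z hZ => by
    obtain ⟨x, hx, hr⟩ := h Z hZ
    exact le_iSup₂_of_le x hx <|
      le_iInf₂ fun z hz => edist_dist x z ▸ ENNReal.ofReal_le_ofReal (hr z hz)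

end KolmogorovWidth

section Projection

variable {E : Type*} [NormedAddCommGroup E] [InnerProductSpace ℝ E]

lemma OrthonormalBasis.norm_sq_starProjection {ι : Type*} [Fintype ι] {K : Submodule ℝ E}
    [K.HasOrthogonalProjection] (b : OrthonormalBasis ι ℝ K) (x : E) :
    ‖K.starProjection x‖ ^ 2 = ∑ k, ⟪(b k : E), x⟫ ^ 2 := by
  rw [K.starProjection_apply, Submodule.norm_coe, ← b.sum_sq_inner_right]
  simp only [Submodule.inner_orthogonalProjectionOnto_eq_of_mem_left]

variable (K : Submodule ℝ E) [K.HasOrthogonalProjection]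

lemma Submodule.dist_starProjection (x : E) :
    dist x (K.starProjection x) = ‖Kᗮ.starProjection x‖ := by
  rw [dist_eq_norm, K.starProjection_orthogonal]
  rfl

lemma Submodule.norm_orthogonal_starProjection_le_dist (x : E) {z : E} (hz : z ∈ K) :
    ‖Kᗮ.starProjection x‖ ≤ dist x z := by
  rw [← K.dist_starProjection, dist_eq_norm, dist_eq_norm, K.starProjection_minimal]
  exact ciInf_le (f := fun y : K => ‖x - y‖) ⟨0, Set.forall_mem_range.2 fun _ => norm_nonneg _⟩
    ⟨z, hz⟩

end Projection

section CoordinateVectors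

variable {ι : Type*} [Fintype ι]

local notation "e" => EuclideanSpace.basisFun ι ℝ

lemma sum_norm_sq_starProjection_basisFun (Z : Submodule ℝ (EuclideanSpace ℝ ι)) :
    ∑ i, ‖Z.starProjection (e i)‖ ^ 2 = finrank ℝ Z := by
  let b := stdOrthonormalBasis ℝ Z
  have hcoord (k) : ∑ i, ⟪(b k : EuclideanSpace ℝ ι), e i⟫ ^ 2 = 1 := by
    rw [(e).sum_sq_inner_left, Submodule.norm_coe, b.norm_eq_one, one_pow]
  simp_rw [b.norm_sq_starProjection]
  rw [sum_comm, sum_congr rfl fun k _ => hcoord k]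
  simp

lemma norm_sq_orthogonal_starProjection_basisFun (Z : Submodule ℝ (EuclideanSpace ℝ ι)) (i : ι) :
    ‖Zᗮ.starProjection (e i)‖ ^ 2 = 1 - ‖Z.starProjection (e i)‖ ^ 2 := by
  have := Z.norm_sq_eq_add_norm_sq_starProjection (e i)
  rw [(e).norm_eq_one, one_pow] at this
  linarith

lemma exists_sqrt_one_sub_le_norm_orthogonal_starProjection [Nonempty ι] {n : ℕ}
    (Z : Submodule ℝ (EuclideanSpace ℝ ι)) (hZ : finrank ℝ Z ≤ n) :
    ∃ i, √(1 - n / Fintype.card ι) ≤ ‖Zᗮ.starProjection (e i)‖ := by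
  obtain ⟨i, hi⟩ : ∃ i, ‖Z.starProjection (e i)‖ ^ 2 ≤ n / Fintype.card ι := by
    by_contra! h
    have hsum := sum_lt_sum_of_nonempty univ_nonempty fun i _ => h i
    rw [sum_norm_sq_starProjection_basisFun, sum_const, card_univ, nsmul_eq_mul,
      mul_div_cancel₀ _ (by positivity)] at hsum
    exact hZ.not_gt (mod_cast hsum)
  refine ⟨i, Real.sqrt_le_iff.2 ⟨norm_nonneg _, ?_⟩⟩
  rw [norm_sq_orthogonal_starProjection_basisFun]
  linarith

lemma norm_apply_le_mul_sum_abs {F : Type*} [SeminormedAddCommGroup F] [NormedSpace ℝ F]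
    (T : EuclideanSpace ℝ ι →ₗ[ℝ] F) {c : ℝ} (hT : ∀ i, ‖T (e i)‖ ≤ c)
    (x : EuclideanSpace ℝ ι) : ‖T x‖ ≤ c * ∑ i, |x i| :=
  calc ‖T x‖ = ‖∑ i, x i • T (e i)‖ := by
        conv_lhs => rw [← (e).sum_repr x]
        simp [map_sum]
    _ ≤ ∑ i, |x i| * c := by
        refine (norm_sum_le _ _).trans (sum_le_sum fun i _ => ?_)
        rw [norm_smul, Real.norm_eq_abs]
        exact mul_le_mul_of_nonneg_left (hT i) (abs_nonneg _)
    _ = c * ∑ i, |x i| := by rw [← sum_mul, mul_comm]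

end CoordinateVectors

lemma sum_cos_two_pi_mul_add {M : ℕ} (hM : 0 < M) (m : ℤ) (α : ℝ) :
    ∑ i : Fin M, cos (2 * π * m * i / M + α) = if (M : ℤ) ∣ m then M * cos α else 0 := by
  set ζ : ℂ := Complex.exp (2 * π * Complex.I / M)
  have hζ : IsPrimitiveRoot ζ M := Complex.isPrimitiveRoot_exp M hM.ne'
  have hterm (i : ℕ) :
      cos (2 * π * m * i / M + α) = (Complex.exp (α * Complex.I) * (ζ ^ m) ^ i).re := by
    rw [← Complex.exp_int_mul, ← Complex.exp_nat_mul, ← Complex.exp_add,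
      ← Complex.exp_ofReal_mul_I_re]
    congr 2
    push_cast
    ring
  have hgeom : ∑ i ∈ range M, (ζ ^ m) ^ i = if (M : ℤ) ∣ m then (M : ℂ) else 0 := by
    split_ifs with h
    · simp [(hζ.zpow_eq_one_iff_dvd m).2 h]
    · have hpow : (ζ ^ m) ^ M = 1 := by
        rw [← zpow_natCast, ← zpow_mul, mul_comm, zpow_mul, zpow_natCast, hζ.pow_eq_one, one_zpow]
      rw [geom_sum_eq (mt (hζ.zpow_eq_one_iff_dvd m).1 h), hpow, sub_self, zero_div]
  rw [Fin.sum_univ_eq_sum_range (fun i => cos (2 * π * m * i / M + α)),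
    sum_congr rfl fun i _ => hterm i, ← Complex.re_sum, ← mul_sum, hgeom]
  split_ifs
  · rw [mul_comm, ← Complex.ofReal_natCast, Complex.re_ofReal_mul, Complex.exp_ofReal_mul_I_re]
  · simp

lemma sum_cos_mul_cos {M t s : ℕ} (hts : t + s < M) (φ ψ : ℝ) :
    ∑ i : Fin M, cos (2 * π * t * i / M - φ) * cos (2 * π * s * i / M - ψ) =
      M / 2 * ((if t = s then cos (φ - ψ) else 0) + (if t + s = 0 then cos (φ + ψ) else 0)) := by
  have hM : 0 < M := by omega
  have hprod (i : Fin M) : cos (2 * π * t * i / M - φ) * cos (2 * π * s * i / M - ψ) =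
      (cos (2 * π * ((t - s : ℤ) : ℝ) * i / M + -(φ - ψ)) +
        cos (2 * π * ((t + s : ℤ) : ℝ) * i / M + -(φ + ψ))) / 2 := by
    have hsub : 2 * π * ((t - s : ℤ) : ℝ) * i / M + -(φ - ψ) =
        (2 * π * t * i / M - φ) - (2 * π * s * i / M - ψ) := by push_cast; ring
    have hadd : 2 * π * ((t + s : ℤ) : ℝ) * i / M + -(φ + ψ) =
        (2 * π * t * i / M - φ) + (2 * π * s * i / M - ψ) := by push_cast; ring
    rw [hsub, hadd, cos_sub (2 * π * t * i / M - φ), cos_add (2 * π * t * i / M - φ)]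
    ring
  have hdvd_sub : (M : ℤ) ∣ (t - s : ℤ) ↔ t = s := by
    refine ⟨fun h => by have := Int.eq_zero_of_abs_lt_dvd h (by rw [abs_lt]; omega); omega,
      fun h => by simp [h]⟩
  have hdvd_add : (M : ℤ) ∣ (t + s : ℤ) ↔ t + s = 0 := by
    refine ⟨fun h => by have := Int.eq_zero_of_abs_lt_dvd h (by rw [abs_lt]; omega); omega,
      fun h => by simp [show (t : ℤ) + s = 0 by omega]⟩
  simp only [hprod, ← sum_div, sum_add_distrib, sum_cos_two_pi_mul_add hM, hdvd_sub, hdvd_add,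
    cos_neg]
  split_ifs <;> ring

/-- The normalized real discrete Fourier basis `1, sin θ, cos θ, sin 2θ, cos 2θ, …` of `ℝ^M`,
sampled at `θ = 2πi/M`. The `j`-th vector has frequency `⌈j/2⌉` and is a sine for odd `j`, written
as `cos (· - π/2)` so that `sum_cos_mul_cos` covers all inner products. The `n` vectors from index
`(n + 1) % 2` on form complete sine–cosine pairs, plus the constant vector when `n` is odd. -/
noncomputable def fourierVec (M j : ℕ) : EuclideanSpace ℝ (Fin M) :=
  WithLp.toLp 2 fun i => √((if j = 0 then 1 else 2) / M) *
    cos (2 * π * ((j + 1) / 2 : ℕ) * i / M - (j % 2 : ℕ) * (π / 2))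

lemma inner_fourierVec {M j j' : ℕ} (hj : 2 * ((j + 1) / 2) < M) (hj' : 2 * ((j' + 1) / 2) < M) :
    ⟪fourierVec M j, fourierVec M j'⟫ = if j = j' then 1 else 0 := by
  have hM : 0 < M := by omega
  have hinner : ⟪fourierVec M j, fourierVec M j'⟫ =
      √((if j = 0 then 1 else 2) / M) * √((if j' = 0 then 1 else 2) / M) *
      ∑ i : Fin M, cos (2 * π * ((j + 1) / 2 : ℕ) * i / M - (j % 2 : ℕ) * (π / 2)) *
        cos (2 * π * ((j' + 1) / 2 : ℕ) * i / M - (j' % 2 : ℕ) * (π / 2)) := by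
    simp only [fourierVec, PiLp.inner_apply, mul_sum, RCLike.inner_apply, conj_trivial]
    refine sum_congr rfl fun i _ => ?_
    ring
  rw [hinner, sum_cos_mul_cos (by omega)]
  rcases eq_or_ne j j' with rfl | hne
  · rw [Real.mul_self_sqrt (by positivity), if_pos rfl, if_pos rfl, sub_self, cos_zero]
    rcases Nat.eq_zero_or_pos j with rfl | hj0
    · norm_num
      field_simp
    · rw [if_neg (by omega), if_neg (by omega)]
      field_simp
      ring
  · have hsum : (j + 1) / 2 + (j' + 1) / 2 ≠ 0 := by omega
    rw [if_neg hne, if_neg hsum, add_zero]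
    by_cases hfreq : (j + 1) / 2 = (j' + 1) / 2
    · -- equal frequencies with `j ≠ j'`: a sine against a cosine
      have hphase : cos ((j % 2 : ℕ) * (π / 2) - (j' % 2 : ℕ) * (π / 2)) = 0 := by
        rcases Nat.mod_two_eq_zero_or_one j with h | h <;>
          rcases Nat.mod_two_eq_zero_or_one j' with h' | h' <;> first | omega | simp [h, h']
      rw [if_pos hfreq, hphase, mul_zero, mul_zero]
    · rw [if_neg hfreq, mul_zero, mul_zero]

lemma fourierVec_zero_apply_sq (M : ℕ) (i : Fin M) : fourierVec M 0 i ^ 2 = 1 / M := by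
  simp [fourierVec]

lemma fourierVec_apply_sq_add_succ {M j : ℕ} (hj : j % 2 = 1) (i : Fin M) :
    fourierVec M j i ^ 2 + fourierVec M (j + 1) i ^ 2 = 2 / M := by
  have hfreq : (j + 1 + 1) / 2 = (j + 1) / 2 := by omega
  simp only [fourierVec, PiLp.toLp_apply, if_neg (by omega : j ≠ 0), if_neg (by omega : j + 1 ≠ 0),
    hfreq, hj, (by omega : (j + 1) % 2 = 0), mul_pow,
    Real.sq_sqrt (by positivity : (0 : ℝ) ≤ 2 / M)]
  push_cast
  rw [zero_mul, sub_zero, one_mul, cos_sub_pi_div_two, ← mul_add, sin_sq_add_cos_sq, mul_one]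

lemma sum_fourierVec_apply_sq (M n : ℕ) (i : Fin M) :
    ∑ k : Fin n, fourierVec M ((n + 1) % 2 + k) i ^ 2 = n / M := by
  rw [Fin.sum_univ_eq_sum_range (fun k => fourierVec M ((n + 1) % 2 + k) i ^ 2)]
  induction n using Nat.twoStepInduction with
  | zero => simp
  | one => simp [fourierVec_zero_apply_sq]
  | more n ih _ =>
    rw [show (n + 2 + 1) % 2 = (n + 1) % 2 by omega, sum_range_succ, sum_range_succ, ih, add_assoc,
      ← add_assoc _ n 1, fourierVec_apply_sq_add_succ (by omega)]
    push_cast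
    ring

lemma orthonormal_fourierVec {M n : ℕ} (hn : n < M) :
    Orthonormal ℝ fun k : Fin n => fourierVec M ((n + 1) % 2 + k) := by
  rw [orthonormal_iff_ite]
  intro k l
  rw [inner_fourierVec (by omega) (by omega)]
  simp [Fin.ext_iff]

lemma exists_submodule_finrank_eq_norm_sq_starProjection_basisFun {M n : ℕ} (hn : n < M) :
    ∃ Z : Submodule ℝ (EuclideanSpace ℝ (Fin M)), finrank ℝ Z = n ∧
      ∀ i, ‖Z.starProjection (EuclideanSpace.basisFun (Fin M) ℝ i)‖ ^ 2 = n / M := by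
  classical
  let b := OrthonormalBasis.span (orthonormal_fourierVec hn) univ
  refine ⟨_, (finrank_eq_card_basis b.toBasis).trans (by simp), fun i => ?_⟩
  rw [b.norm_sq_starProjection, ← sum_fourierVec_apply_sq M n i]
  simp [b, EuclideanSpace.inner_single_right]

lemma exists_submodule_finrank_le_norm_orthogonal_starProjection_le (M n : ℕ) :
    ∃ Z : Submodule ℝ (EuclideanSpace ℝ (Fin M)), finrank ℝ Z ≤ n ∧
      ∀ i, ‖Zᗮ.starProjection (EuclideanSpace.basisFun (Fin M) ℝ i)‖ ≤ √(1 - n / M) := by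
  rcases lt_or_ge n M with hn | hn
  · obtain ⟨Z, hZn, hZ⟩ := exists_submodule_finrank_eq_norm_sq_starProjection_basisFun hn
    refine ⟨Z, hZn.le, fun i => Real.le_sqrt_of_sq_le ?_⟩
    rw [norm_sq_orthogonal_starProjection_basisFun, hZ]
  · refine ⟨⊤, by simpa using hn, fun i => ?_⟩
    simp [Submodule.top_orthogonal_eq_bot]

theorem stmt9_general (M n : ℕ) (hM : 0 < M) :
    kolWidth n {a : EuclideanSpace ℝ (Fin M) | ∑ i, |a i| ≤ 1} =
      ENNReal.ofReal (Real.sqrt (1 - (n : ℝ) / (M : ℝ))) := by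
  apply le_antisymm
  · obtain ⟨Z, hZn, hZ⟩ := exists_submodule_finrank_le_norm_orthogonal_starProjection_le M n
    refine kolWidth_le_ofReal Z (by rw [← finrank_eq_rank]; exact_mod_cast hZn) fun x hx =>
      ⟨Z.starProjection x, Z.coe_mem _, ?_⟩
    rw [Z.dist_starProjection]
    exact (norm_apply_le_mul_sum_abs Zᗮ.starProjection.toLinearMap hZ x).trans
      (mul_le_of_le_one_right (sqrt_nonneg _) hx)
  · refine ofReal_le_kolWidth fun Z hZ => ?_
    have : Nonempty (Fin M) := ⟨⟨0, hM⟩⟩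
    obtain ⟨i, hi⟩ :=
      exists_sqrt_one_sub_le_norm_orthogonal_starProjection Z (finrank_le_of_rank_le hZ)
    rw [Fintype.card_fin] at hi
    exact ⟨_, by simp [apply_ite], fun z hz =>
      hi.trans (Z.norm_orthogonal_starProjection_le_dist _ hz)⟩

/-- `d_n(b_1^M, ℓ_2^M) = √(1 - n/M)` for `0 ≤ n ≤ M`: the Kolmogorov `n`-width of
the unit ball of `ℓ¹` in `ℝ^M`, measured in the Euclidean norm. -/
theorem stmt9 (M n : ℕ) (hM : 0 < M) (hn : n ≤ M) :
    kolWidth n {a : EuclideanSpace ℝ (Fin M) | ∑ i, |a i| ≤ 1} =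
      ENNReal.ofReal (Real.sqrt (1 - (n : ℝ) / (M : ℝ))) :=
  stmt9_general M n hM
end

section
/- Let G be a compact group acting transitively and measure-preservingly on a compact metric measure space M with invariant measure μ, and let V be a finite-dimensional G-invariant space of real-valued continuous functions on M, equipped with the L²(μ) inner product. If {v₁,…,v_m} is an orthonormal basis of V, then for every x ∈ M, ∑_{k=1}^m v_k(x)² = m / μ(M). -/
/-!
The function `Z x = ∑ₖ vₖ(x)²` is the diagonal of the reproducing kernel of `V`, so it does not
depend on the orthonormal basis. A measure-preserving map `T` with `V ∘ T ⊆ V` sends the basis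
`(vₖ)` to another orthonormal basis `(vₖ ∘ T)` of `V`; the change of basis is an orthogonal
matrix, hence `Z ∘ T = Z`. By transitivity `Z` is constant, and integrating it gives
`Z · μ(M) = ∑ₖ ‖vₖ‖² = m`.
-/

open MeasureTheory Matrix

section L2Gram

variable {M : Type*} [MeasurableSpace M] (μ : Measure M) {ι : Type*}

noncomputable def l2Gram (v : ι → M → ℝ) : Matrix ι ι ℝ :=
  Matrix.of fun k l => ∫ x, v k x * v l x ∂μ

variable {μ}

theorem l2Gram_linearCombination [Fintype ι] {v : ι → M → ℝ}
    (hint : ∀ k l, Integrable (fun x => v k x * v l x) μ) (A : Matrix ι ι ℝ) :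
    l2Gram μ (fun k x => ∑ l, A k l * v l x) = A * l2Gram μ v * Aᵀ := by
  ext k k'
  have hexpand : (fun x => (∑ l, A k l * v l x) * ∑ l', A k' l' * v l' x)
      = fun x => ∑ l, ∑ l', A k l * A k' l' * (v l x * v l' x) := by
    funext x
    rw [Finset.sum_mul_sum]
    exact Finset.sum_congr rfl fun l _ => Finset.sum_congr rfl fun l' _ => by ring
  rw [l2Gram, of_apply, hexpand,
    integral_finsetSum _ fun l _ => integrable_finsetSum _ fun l' _ => (hint l l').const_mul _]
  simp only [mul_apply, transpose_apply, l2Gram, of_apply, Finset.sum_mul]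
  rw [Finset.sum_comm]
  refine Finset.sum_congr rfl fun l _ => ?_
  rw [integral_finsetSum _ fun l' _ => (hint l l').const_mul _]
  exact Finset.sum_congr rfl fun l' _ => by rw [integral_const_mul]; ring

theorem l2Gram_comp_of_measurePreserving {v : ι → M → ℝ}
    (hint : ∀ k l, Integrable (fun x => v k x * v l x) μ) {T : M → M}
    (hT : MeasurePreserving T μ μ) :
    l2Gram μ (fun k x => v k (T x)) = l2Gram μ v := by
  ext k l
  have hmeas : AEStronglyMeasurable (fun x => v k x * v l x) (μ.map T) := by
    rw [hT.map_eq]; exact (hint k l).aestronglyMeasurable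
  simp only [l2Gram, of_apply]
  rw [← integral_map hT.aemeasurable hmeas, hT.map_eq]

theorem integral_sum_sq_eq_card [Fintype ι] [DecidableEq ι] {v : ι → M → ℝ}
    (hint : ∀ k l, Integrable (fun x => v k x * v l x) μ) (hON : l2Gram μ v = 1) :
    ∫ x, ∑ k, v k x ^ 2 ∂μ = Fintype.card ι := by
  rw [integral_finsetSum _ fun k _ => by simpa only [sq] using hint k k, ← trace_one, ← hON]
  simp only [trace, diag, l2Gram, of_apply, sq]

end L2Gram

theorem dotProduct_mulVec_self_of_transpose_mul_self {ι R : Type*} [Fintype ι] [DecidableEq ι]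
    [CommRing R] {A : Matrix ι ι R} (hA : Aᵀ * A = 1) (u : ι → R) :
    A *ᵥ u ⬝ᵥ A *ᵥ u = u ⬝ᵥ u := by
  rw [dotProduct_mulVec, ← mulVec_transpose, mulVec_mulVec, hA, one_mulVec]

theorem sum_sq_comp_eq_of_measurePreserving {M : Type*} [MeasurableSpace M] {μ : Measure M}
    {ι : Type*} [Fintype ι] [DecidableEq ι] {v : ι → M → ℝ}
    (hint : ∀ k l, Integrable (fun x => v k x * v l x) μ) (hON : l2Gram μ v = 1)
    {T : M → M} (hT : MeasurePreserving T μ μ)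
    (hTv : ∀ k, (fun x => v k (T x)) ∈ Submodule.span ℝ (Set.range v)) (x : M) :
    ∑ k, v k (T x) ^ 2 = ∑ k, v k x ^ 2 := by
  choose A hA using fun k => (Submodule.mem_span_range_iff_exists_fun ℝ).1 (hTv k)
  change Matrix ι ι ℝ at A
  have hvT : (fun k x => v k (T x)) = fun k x => ∑ l, A k l * v l x := by
    ext k y
    rw [← congrFun (hA k) y]
    simp only [Finset.sum_apply, Pi.smul_apply, smul_eq_mul]
  have horth : Aᵀ * A = 1 := by
    have hgram := l2Gram_linearCombination hint A
    rw [← hvT, l2Gram_comp_of_measurePreserving hint hT, hON, mul_one] at hgram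
    exact mul_eq_one_comm.1 hgram.symm
  have hpt : (fun k => v k (T x)) = A *ᵥ fun l => v l x := by
    ext k
    exact congrFun (congrFun hvT k) x
  have hnorm := dotProduct_mulVec_self_of_transpose_mul_self horth fun l => v l x
  rw [← hpt] at hnorm
  simpa only [dotProduct, ← sq] using hnorm

theorem stmt14_general {G M : Type*} [Group G]
    [MetricSpace M] [CompactSpace M] [MeasurableSpace M] [BorelSpace M]
    [MulAction G M] [MulAction.IsPretransitive G M]
    (μ : Measure M) [IsFiniteMeasure μ] (hμ : μ Set.univ ≠ 0)
    (hinv : ∀ g : G, MeasurePreserving (fun x : M => g • x) μ μ)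
    (m : ℕ) (v : Fin m → M → ℝ) (hcont : ∀ k, Continuous (v k))
    (hON : ∀ k l, ∫ x, v k x * v l x ∂μ = if k = l then 1 else 0)
    (hVinv : ∀ (g : G) (k : Fin m),
      (fun x : M => v k (g⁻¹ • x)) ∈ Submodule.span ℝ (Set.range v)) :
    ∀ x : M, ∑ k, (v k x) ^ 2 = (m : ℝ) / (μ Set.univ).toReal := by
  have hint : ∀ k l, Integrable (fun x => v k x * v l x) μ := fun k l =>
    ((hcont k).mul (hcont l)).integrable_of_hasCompactSupport (.of_compactSpace _)
  have hgram : l2Gram μ v = 1 := by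
    ext k l
    simp only [l2Gram, of_apply, hON, one_apply]
  have hconst : ∀ x y, ∑ k, v k x ^ 2 = ∑ k, v k y ^ 2 := by
    intro x y
    obtain ⟨g, rfl⟩ := MulAction.exists_smul_eq G y x
    simpa only [inv_smul_smul] using
      (sum_sq_comp_eq_of_measurePreserving hint hgram (hinv g⁻¹) (hVinv g) (g • y)).symm
  intro x
  have hvol : (μ Set.univ).toReal ≠ 0 := ENNReal.toReal_ne_zero.2 ⟨hμ, measure_ne_top μ _⟩
  have hintegral := integral_sum_sq_eq_card hint hgram
  rw [funext fun y => hconst y x, integral_const, Measure.real_def, smul_eq_mul,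
    Fintype.card_fin] at hintegral
  rw [← hintegral, mul_div_cancel_left₀ _ hvol]

/-- If a compact group `G` acts transitively and measure-preservingly on a compact metric
measure space `M`, and `{v₁, …, v_m}` is an orthonormal basis (in `L²(μ)`) of a
finite-dimensional `G`-invariant space of real-valued continuous functions, then
`∑_{k=1}^m v_k(x)² = m / μ(M)` for every `x ∈ M`. -/
theorem stmt14 {G M : Type*} [Group G] [TopologicalSpace G] [CompactSpace G]
    [MetricSpace M] [CompactSpace M] [MeasurableSpace M] [BorelSpace M]
    [MulAction G M] [MulAction.IsPretransitive G M]
    (μ : Measure M) [IsFiniteMeasure μ] (hμ : μ Set.univ ≠ 0)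
    (hinv : ∀ g : G, MeasurePreserving (fun x : M => g • x) μ μ)
    (m : ℕ) (v : Fin m → M → ℝ) (hcont : ∀ k, Continuous (v k))
    (hON : ∀ k l, ∫ x, v k x * v l x ∂μ = if k = l then 1 else 0)
    (hVinv : ∀ (g : G) (k : Fin m),
      (fun x : M => v k (g⁻¹ • x)) ∈ Submodule.span ℝ (Set.range v)) :
    ∀ x : M, ∑ k, (v k x) ^ 2 = (m : ℝ) / (μ Set.univ).toReal :=
  stmt14_general μ hμ hinv m v hcont hON hVinv
end
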